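/- Let v1, v2 > 0, let m be a positive integer, and let 0 < b < m. If a strategy profile (X, Y) with E(X) = m and E(Y) = b is a Nash equilibrium of the two-player all-pay auction with valuations (v1, v2), then m = v2/2, (X, Y) is a Nash equilibrium of the discrete General Lotto game Γ(m, b), and X = U_O^m. -/

import Mathlib

open scoped BigOperators

/-- A (mixed) strategy: a probability distribution on the nonnegative
integers with finite expectation. -/
structure Strategy where
  p : ℕ → ℝ
  nonneg : ∀ n, 0 ≤ p n
  total : HasSum p 1
  finExp : Summable fun n : ℕ => (n : ℝ) * p n

namespace Strategy

/-- Expectation of a strategy. -/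
noncomputable def exp (ξ : Strategy) : ℝ := ∑' n : ℕ, (n : ℝ) * ξ.p n

end Strategy

/-- Probability that an observation from `ξ` strictly exceeds an independent
observation from `η`. -/
noncomputable def prGT (ξ η : Strategy) : ℝ :=
  ∑' n, ξ.p n * ∑ k ∈ Finset.range n, η.p k

/-- Probability that independent observations from `ξ` and `η` are equal. -/
noncomputable def prEq (ξ η : Strategy) : ℝ := ∑' n, ξ.p n * η.p n

/-- Expected all-pay auction payoff of a player with valuation `v` playing `ξ`
against `η`:  `v·Pr(X > Y) + (v/2)·Pr(X = Y) − E(X)`. -/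
noncomputable def payoff (v : ℝ) (ξ η : Strategy) : ℝ :=
  v * prGT ξ η + v / 2 * prEq ξ η - ξ.exp

/-- Nash equilibrium of the two-player all-pay auction with valuations `(v1, v2)`. -/
def IsNashAPA (v1 v2 : ℝ) (X Y : Strategy) : Prop :=
  (∀ X' : Strategy, payoff v1 X' Y ≤ payoff v1 X Y) ∧
  (∀ Y' : Strategy, payoff v2 Y' X ≤ payoff v2 Y X)

/-- `H(ξ, η) = Pr(X > Y) − Pr(X < Y)`. -/
noncomputable def Hval (ξ η : Strategy) : ℝ := prGT ξ η - prGT η ξ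

/-- Nash equilibrium of the discrete General Lotto game `Γ(b1, b2)`. -/
def IsNashLotto (b1 b2 : ℝ) (X Y : Strategy) : Prop :=
  X.exp = b1 ∧ Y.exp = b2 ∧
  (∀ X' : Strategy, X'.exp = b1 → Hval X' Y ≤ Hval X Y) ∧
  (∀ Y' : Strategy, Y'.exp = b2 → Hval Y' X ≤ Hval Y X)

/-- `U_O^m`: uniform distribution on the odd numbers `{1, 3, …, 2m−1}` (as a pmf). -/
noncomputable def UO (m : ℕ) : ℕ → ℝ := fun n =>
  if Odd n ∧ n < 2 * m then (m : ℝ)⁻¹ else 0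

/-- `U_E^m`: uniform distribution on the even numbers `{0, 2, …, 2m}` (as a pmf). -/
noncomputable def UE (m : ℕ) : ℕ → ℝ := fun n =>
  if Even n ∧ n ≤ 2 * m then ((m : ℝ) + 1)⁻¹ else 0

/-- `U_{O↑1}^m`: uniform distribution on the even numbers `{2, 4, …, 2m−2}` (as a pmf). -/
noncomputable def UOup (m : ℕ) : ℕ → ℝ := fun n =>
  if Even n ∧ 0 < n ∧ n ≤ 2 * m - 2 then ((m : ℝ) - 1)⁻¹ else 0

/-- `δ_j`: the point mass at `j` (as a pmf). -/
noncomputable def deltaFn (j : ℕ) : ℕ → ℝ := fun n => if n = j then 1 else 0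

/-- `W_j^m = (1/(2m))·δ_0 + Σ_{i=1}^{j−1}(1/m)·δ_{2i} + (1/(2m))·δ_{2j}
      + Σ_{i=j+1}^{m}(1/m)·δ_{2i−1}` (as a pmf). -/
noncomputable def Wfn (j m : ℕ) : ℕ → ℝ := fun n =>
  if n = 0 ∨ n = 2 * j then (2 * (m : ℝ))⁻¹
  else if Even n ∧ n < 2 * j then (m : ℝ)⁻¹
  else if Odd n ∧ 2 * j < n ∧ n < 2 * m then (m : ℝ)⁻¹
  else 0

/-- `V_j^m = Σ_{i=1}^{j−1}(2/(2m+1))·δ_{2i−1} + (1/(2m+1))·δ_{2j−1}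
      + Σ_{i=j}^{m}(2/(2m+1))·δ_{2i}` (as a pmf). -/
noncomputable def Vfn (j m : ℕ) : ℕ → ℝ := fun n =>
  if n = 2 * j - 1 then (2 * (m : ℝ) + 1)⁻¹
  else if Odd n ∧ n < 2 * j - 1 then 2 * (2 * (m : ℝ) + 1)⁻¹
  else if Even n ∧ 2 * j ≤ n ∧ n ≤ 2 * m then 2 * (2 * (m : ℝ) + 1)⁻¹
  else 0

/-!
Write `T_ξ(j) = Pr(ξ < j) + Pr(ξ = j) / 2` for the mid-cdf of `ξ`. Since
`payoff v ξ η = v/2 · (H(ξ, η) + 1) - E ξ`, an all-pay equilibrium is a Lotto equilibrium for its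
own means, and the pure bid `j` earns `v · T_X(j) - j` against `X`.

The mid-cdf of `U_O^m` is `j / (2m)` on `0, …, 2m`, so by playing it player 1 secures
`H(X, Y) ≥ 1 - b/m`, which bounds the equilibrium payoff `P` of player 2 by `b (v₂/(2m) - 1)`.
Bidding `0` gives `P ≥ 0`, and averaging the bids `0, …, 2m` against a strategy of mean `m` gives
`P ≥ v₂/2 - m`; as `b < m` this forces `v₂ = 2m` and `P = 0`. Then `T_X(j) ≤ j / (2m)` for every
`j`, while the sum of `T_X` over `0, …, 2m` is at least that of `j / (2m)`. Hence `T_X` is the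
mid-cdf of `U_O^m`, and the mid-cdf determines the distribution.
-/

open Finset

namespace Strategy

variable (ξ η : Strategy)

theorem summable_p : Summable ξ.p := ξ.total.summable

theorem sum_p_le_one (s : Finset ℕ) : ∑ i ∈ s, ξ.p i ≤ 1 :=
  ξ.total.tsum_eq ▸ ξ.summable_p.sum_le_tsum s fun i _ => ξ.nonneg i

theorem p_le_one (n : ℕ) : ξ.p n ≤ 1 := by
  simpa using ξ.sum_p_le_one {n}

theorem summable_mul {c : ℕ → ℝ} (h0 : ∀ k, 0 ≤ c k) (h1 : ∀ k, c k ≤ 1) :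
    Summable fun k => ξ.p k * c k :=
  .of_nonneg_of_le (fun k => mul_nonneg (ξ.nonneg k) (h0 k))
    (fun k => mul_le_of_le_one_right (ξ.nonneg k) (h1 k)) ξ.summable_p

theorem hasSum_mul_affine (a c : ℝ) :
    HasSum (fun k : ℕ => ξ.p k * (a + c * k)) (a + c * ξ.exp) := by
  have h := (ξ.total.mul_left a).add (ξ.finExp.hasSum.mul_left c)
  rw [mul_one] at h
  exact h.congr_fun fun k => by ring

theorem tsum_mul_le_affine {f : ℕ → ℝ} {a c : ℝ} (h0 : ∀ k, 0 ≤ f k)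
    (h : ∀ k, f k ≤ a + c * k) : ∑' k, ξ.p k * f k ≤ a + c * ξ.exp := by
  have hle k : ξ.p k * f k ≤ ξ.p k * (a + c * k) := mul_le_mul_of_nonneg_left (h k) (ξ.nonneg k)
  have hs := ξ.hasSum_mul_affine a c
  exact hasSum_le hle (Summable.of_nonneg_of_le (fun k => mul_nonneg (ξ.nonneg k) (h0 k)) hle
    hs.summable).hasSum hs

noncomputable def midCdf (j : ℕ) : ℝ := ∑ i ∈ range j, ξ.p i + ξ.p j / 2

theorem midCdf_nonneg (j : ℕ) : 0 ≤ ξ.midCdf j :=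
  add_nonneg (sum_nonneg fun i _ => ξ.nonneg i) (div_nonneg (ξ.nonneg j) zero_le_two)

theorem midCdf_le_one (j : ℕ) : ξ.midCdf j ≤ 1 := by
  have := ξ.sum_p_le_one (range (j + 1))
  rw [sum_range_succ] at this
  unfold midCdf
  linarith [ξ.nonneg j]

theorem two_mul_midCdf_succ (n : ℕ) :
    2 * ξ.midCdf (n + 1) = 2 * ξ.midCdf n + ξ.p n + ξ.p (n + 1) := by
  unfold midCdf
  rw [sum_range_succ]
  ring

variable {ξ η} in
theorem p_eq_of_midCdf_eq {N : ℕ} (h : ∀ j ≤ N, ξ.midCdf j = η.midCdf j) :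
    ∀ n ≤ N, ξ.p n = η.p n := by
  intro n hn
  induction n with
  | zero => simpa [midCdf] using h 0 hn
  | succ n ih =>
    linarith [ih (by omega), h n (by omega), h (n + 1) hn, ξ.two_mul_midCdf_succ n,
      η.two_mul_midCdf_succ n]

theorem p_eq_zero_of_midCdf_eq_one {N n : ℕ} (h : ξ.midCdf N = 1) (hn : N < n) : ξ.p n = 0 := by
  have hmono : ∑ i ∈ range (N + 1), ξ.p i ≤ ∑ i ∈ range n, ξ.p i :=
    sum_le_sum_of_subset_of_nonneg (range_subset_range.2 hn) fun i _ _ => ξ.nonneg i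
  have htot := ξ.sum_p_le_one (range (n + 1))
  rw [sum_range_succ] at hmono htot
  unfold midCdf at h
  linarith [ξ.nonneg N, ξ.nonneg n]

noncomputable def dirac (j : ℕ) : Strategy where
  p := deltaFn j
  nonneg n := by unfold deltaFn; split <;> norm_num
  total := hasSum_ite_eq j 1
  finExp := summable_of_ne_finset_zero (s := {j}) fun n hn => by
    simp [deltaFn, mem_singleton.not.mp hn]

theorem tsum_dirac_mul (j : ℕ) (f : ℕ → ℝ) : ∑' n, (dirac j).p n * f n = f j := by
  simp [dirac, deltaFn]

theorem exp_dirac (j : ℕ) : (dirac j).exp = j := by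
  simp [exp, dirac, deltaFn]

theorem midCdf_dirac (j k : ℕ) :
    (dirac j).midCdf k = (if j < k then 1 else 0) + if k = j then 1 / 2 else 0 := by
  simp only [midCdf, dirac, deltaFn, sum_ite_eq', mem_range]
  split_ifs <;> norm_num

end Strategy

open Strategy

theorem hasSum_ite_prod_of_fiberwise {ξ η : Strategy} (P : ℕ × ℕ → Prop) [DecidablePred P]
    {g : ℕ → ℝ} (hg : ∀ a, HasSum (fun b => if P (a, b) then ξ.p a * η.p b else 0) (g a)) :
    HasSum (fun q => if P q then ξ.p q.1 * η.p q.2 else 0) (∑' a, g a) := by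
  have hf : Summable fun q => if P q then ξ.p q.1 * η.p q.2 else 0 :=
    .of_nonneg_of_le (fun q => by split_ifs <;> simp [mul_nonneg, ξ.nonneg, η.nonneg])
      (fun q => by split_ifs <;> simp [mul_nonneg, ξ.nonneg, η.nonneg])
      (ξ.summable_p.mul_of_nonneg η.summable_p ξ.nonneg η.nonneg)
  rw [(hf.hasSum.prod_fiberwise hg).tsum_eq]
  exact hf.hasSum

theorem hasSum_prGT (ξ η : Strategy) :
    HasSum (fun q : ℕ × ℕ => if q.2 < q.1 then ξ.p q.1 * η.p q.2 else 0) (prGT ξ η) := by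
  refine hasSum_ite_prod_of_fiberwise (fun q : ℕ × ℕ => q.2 < q.1) fun a => ?_
  have h : HasSum (fun b => if b < a then ξ.p a * η.p b else 0)
      (∑ b ∈ range a, if b < a then ξ.p a * η.p b else 0) :=
    hasSum_sum_of_ne_finset_zero fun b hb => by simp_all
  rwa [sum_congr rfl fun b hb => if_pos (mem_range.1 hb), ← mul_sum] at h

theorem hasSum_prEq (ξ η : Strategy) :
    HasSum (fun q : ℕ × ℕ => if q.1 = q.2 then ξ.p q.1 * η.p q.2 else 0) (prEq ξ η) := by
  refine hasSum_ite_prod_of_fiberwise (fun q : ℕ × ℕ => q.1 = q.2) fun a => ?_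
  exact (hasSum_ite_eq' a (ξ.p a * η.p a)).congr_fun fun b => by split_ifs with h <;> simp_all

theorem prGT_add_prGT_add_prEq (ξ η : Strategy) : prGT ξ η + prGT η ξ + prEq ξ η = 1 := by
  have hlt := (Equiv.prodComm ℕ ℕ).hasSum_iff.mpr (hasSum_prGT η ξ)
  have hprod : HasSum (fun q : ℕ × ℕ => ξ.p q.1 * η.p q.2) 1 := by
    simpa using ξ.total.mul η.total (ξ.summable_p.mul_of_nonneg η.summable_p ξ.nonneg η.nonneg)
  refine ((hasSum_prGT ξ η).add hlt |>.add (hasSum_prEq ξ η)).unique (hprod.congr_fun fun q => ?_)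
  rcases lt_trichotomy q.1 q.2 with h | h | h
  · simp [h, h.ne, h.not_gt, mul_comm]
  · simp [h]
  · simp [h, h.ne', h.not_gt]

theorem hasSum_mul_midCdf (ξ η : Strategy) :
    HasSum (fun k => η.p k * ξ.midCdf k) (prGT η ξ + prEq ξ η / 2) := by
  have hlt : HasSum (fun k => η.p k * ∑ i ∈ range k, ξ.p i) (prGT η ξ) :=
    (η.summable_mul (fun k => sum_nonneg fun i _ => ξ.nonneg i) fun k => ξ.sum_p_le_one _).hasSum
  have heq : HasSum (fun k => ξ.p k * η.p k) (prEq ξ η) :=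
    (ξ.summable_mul η.nonneg η.p_le_one).hasSum
  exact (hlt.add (heq.div_const 2)).congr_fun fun k => by unfold midCdf; ring

theorem Hval_eq_one_sub_tsum_mul_midCdf (ξ η : Strategy) :
    Hval ξ η = 1 - 2 * ∑' k, η.p k * ξ.midCdf k := by
  rw [(hasSum_mul_midCdf ξ η).tsum_eq, Hval]
  linarith [prGT_add_prGT_add_prEq ξ η]

theorem Hval_swap (ξ η : Strategy) : Hval η ξ = -Hval ξ η := by
  rw [Hval, Hval]
  ring

theorem tsum_mul_midCdf_add_tsum_mul_midCdf (ξ η : Strategy) :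
    ∑' k, η.p k * ξ.midCdf k + ∑' k, ξ.p k * η.midCdf k = 1 := by
  linarith [Hval_swap ξ η, Hval_eq_one_sub_tsum_mul_midCdf ξ η,
    Hval_eq_one_sub_tsum_mul_midCdf η ξ]

theorem payoff_eq_Hval (v : ℝ) (ξ η : Strategy) :
    payoff v ξ η = v / 2 * (Hval ξ η + 1) - ξ.exp := by
  rw [payoff, Hval]
  linear_combination v / 2 * prGT_add_prGT_add_prEq ξ η

theorem payoff_dirac (v : ℝ) (j : ℕ) (η : Strategy) :
    payoff v (dirac j) η = v * η.midCdf j - j := by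
  rw [payoff, prGT, prEq, tsum_dirac_mul, tsum_dirac_mul, exp_dirac, midCdf]
  ring

theorem isNashLotto_of_isNashAPA {v1 v2 : ℝ} (hv1 : 0 < v1) (hv2 : 0 < v2) {X Y : Strategy}
    (h : IsNashAPA v1 v2 X Y) : IsNashLotto X.exp Y.exp X Y := by
  refine ⟨rfl, rfl, fun X' hX' => ?_, fun Y' hY' => ?_⟩
  · have := h.1 X'
    rw [payoff_eq_Hval, payoff_eq_Hval, hX'] at this
    nlinarith
  · have := h.2 Y'
    rw [payoff_eq_Hval, payoff_eq_Hval, hY'] at this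
    nlinarith

namespace Strategy

theorem one_sub_midCdf_eq_tsum (ξ : Strategy) (j : ℕ) :
    1 - ξ.midCdf j = ∑' k, ξ.p k * (dirac j).midCdf k := by
  linarith [tsum_mul_midCdf_add_tsum_mul_midCdf ξ (dirac j), tsum_dirac_mul j ξ.midCdf]

theorem sum_range_midCdf_dirac_le (N k : ℕ) : ∑ j ∈ range N, (dirac j).midCdf k ≤ k + 1 / 2 := by
  simp only [midCdf_dirac, sum_add_distrib, sum_boole, sum_ite_eq, mem_range]
  have hcard : #{j ∈ range N | j < k} ≤ k :=
    (card_le_card fun j => by simp +contextual).trans (card_range k).le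
  have : ((#{j ∈ range N | j < k} : ℕ) : ℝ) ≤ k := by exact_mod_cast hcard
  split_ifs <;> linarith

theorem sum_range_one_sub_midCdf_le (ξ : Strategy) (N : ℕ) :
    ∑ j ∈ range N, (1 - ξ.midCdf j) ≤ ξ.exp + 1 / 2 := by
  have hs j : Summable fun k => ξ.p k * (dirac j).midCdf k :=
    ξ.summable_mul (dirac j).midCdf_nonneg (dirac j).midCdf_le_one
  simp_rw [one_sub_midCdf_eq_tsum, ← Summable.tsum_finsetSum fun j _ => hs j, ← mul_sum]
  exact (ξ.tsum_mul_le_affine (a := 1 / 2) (c := 1)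
    (fun k => sum_nonneg fun j _ => midCdf_nonneg _ _)
    fun k => (sum_range_midCdf_dirac_le N k).trans_eq (by ring)).trans_eq (by ring)

end Strategy

theorem UO_add_UO_succ {m n : ℕ} (h : n < 2 * m) : UO m n + UO m (n + 1) = (m : ℝ)⁻¹ := by
  rcases Nat.even_or_odd n with ⟨k, rfl⟩ | ⟨k, rfl⟩
  · have h1 : ¬Odd (k + k) := Nat.not_odd_iff_even.2 ⟨k, rfl⟩
    have h2 : Odd (k + k + 1) := ⟨k, by ring⟩
    simp [UO, h1, h2, show k + k + 1 < 2 * m by omega]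
  · have h1 : ¬Odd (2 * k + 1 + 1) := Nat.not_odd_iff_even.2 ⟨k + 1, by ring⟩
    simp [UO, h1, h]

theorem hasSum_mul_UO (m : ℕ) (g : ℕ → ℝ) :
    HasSum (fun n => g n * UO m n) ((∑ i ∈ range m, g (2 * i + 1)) / m) := by
  have hsupp n : Odd n ∧ n < 2 * m ↔ n ∈ (range m).image (2 * · + 1) := by
    simp only [mem_image, mem_range, Odd]
    constructor
    · rintro ⟨⟨i, rfl⟩, h⟩
      exact ⟨i, by omega, rfl⟩
    · rintro ⟨i, hi, rfl⟩
      exact ⟨⟨i, rfl⟩, by omega⟩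
  rw [show (∑ i ∈ range m, g (2 * i + 1)) / m = ∑ n ∈ (range m).image (2 * · + 1), g n * UO m n
    from ?_]
  · exact hasSum_sum_of_ne_finset_zero fun n hn => by simp [UO, hsupp, hn]
  rw [sum_image fun _ _ _ _ h => by omega, sum_div]
  refine sum_congr rfl fun i hi => ?_
  simp [UO, (hsupp _).2 (mem_image_of_mem _ hi), div_eq_mul_inv]

namespace Strategy

noncomputable def uniformOdd {m : ℕ} (hm : 0 < m) : Strategy where
  p := UO m
  nonneg n := by unfold UO; split <;> positivity
  total := by
    simpa [div_self (Nat.cast_ne_zero.2 hm.ne' : (m : ℝ) ≠ 0)] using hasSum_mul_UO m 1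
  finExp := (hasSum_mul_UO m (↑)).summable

theorem exp_uniformOdd {m : ℕ} (hm : 0 < m) : (uniformOdd hm).exp = m := by
  have hodd (k : ℕ) : ∑ i ∈ range k, ((2 * i + 1 : ℕ) : ℝ) = k ^ 2 := by
    induction k with
    | zero => simp
    | succ k ih =>
      rw [sum_range_succ, ih]
      push_cast
      ring
  refine (hasSum_mul_UO m (↑)).tsum_eq.trans ?_
  rw [hodd]
  field_simp

theorem midCdf_uniformOdd {m : ℕ} (hm : 0 < m) {j : ℕ} (hj : j ≤ 2 * m) :
    (uniformOdd hm).midCdf j = j / (2 * m) := by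
  induction j with
  | zero => simp [midCdf, uniformOdd, UO]
  | succ j ih =>
    have h := (uniformOdd hm).two_mul_midCdf_succ j
    have hsum : (uniformOdd hm).p j + (uniformOdd hm).p (j + 1) = (m : ℝ)⁻¹ :=
      UO_add_UO_succ (by omega)
    rw [ih (by omega)] at h
    field_simp at h hsum ⊢
    push_cast
    linarith

theorem midCdf_uniformOdd_le {m : ℕ} (hm : 0 < m) (j : ℕ) :
    (uniformOdd hm).midCdf j ≤ j / (2 * m) := by
  rcases le_or_gt j (2 * m) with hj | hj
  · exact (midCdf_uniformOdd hm hj).le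
  · refine ((uniformOdd hm).midCdf_le_one j).trans ?_
    rw [le_div_iff₀ (by positivity)]
    exact_mod_cast (by omega : 1 * (2 * m) ≤ j)

end Strategy

theorem le_Hval_uniformOdd {m : ℕ} (hm : 0 < m) (η : Strategy) :
    1 - η.exp / m ≤ Hval (uniformOdd hm) η := by
  have h := η.tsum_mul_le_affine (uniformOdd hm).midCdf_nonneg (a := 0) (c := 1 / (2 * m))
    fun k => by simpa [div_eq_inv_mul] using midCdf_uniformOdd_le hm k
  rw [Hval_eq_one_sub_tsum_mul_midCdf]
  have : 2 * (0 + 1 / (2 * (m : ℝ)) * η.exp) = η.exp / m := by ring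
  linarith

theorem sum_range_cast_two_mul_add_one (m : ℕ) :
    ∑ j ∈ range (2 * m + 1), (j : ℝ) = m * (2 * m + 1) := by
  induction m with
  | zero => simp
  | succ m ih =>
    rw [show 2 * (m + 1) + 1 = 2 * m + 1 + 1 + 1 by ring, sum_range_succ, sum_range_succ, ih]
    push_cast
    ring

namespace Strategy

theorem le_sum_range_midCdf {ξ : Strategy} {m : ℕ} (hξ : ξ.exp = m) :
    m + 1 / 2 ≤ ∑ j ∈ range (2 * m + 1), ξ.midCdf j := by
  have h := ξ.sum_range_one_sub_midCdf_le (2 * m + 1)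
  rw [sum_sub_distrib, sum_const, card_range, nsmul_one, hξ] at h
  push_cast at h
  linarith

theorem midCdf_eq_of_le {ξ : Strategy} {m : ℕ} (hm : 0 < m) (hξ : ξ.exp = m)
    (h : ∀ j, ξ.midCdf j ≤ j / (2 * m)) {j : ℕ} (hj : j ≤ 2 * m) : ξ.midCdf j = j / (2 * m) := by
  have hsum : ∑ j ∈ range (2 * m + 1), (j : ℝ) / (2 * m) = m + 1 / 2 := by
    rw [← sum_div, sum_range_cast_two_mul_add_one]
    field_simp
  have heq : ∑ j ∈ range (2 * m + 1), ξ.midCdf j = ∑ j ∈ range (2 * m + 1), (j : ℝ) / (2 * m) :=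
    le_antisymm (sum_le_sum fun j _ => h j) (hsum ▸ le_sum_range_midCdf hξ)
  exact (sum_eq_sum_iff_of_le fun j _ => h j).1 heq j (mem_range.2 (by omega))

theorem p_eq_UO_of_midCdf_le {ξ : Strategy} {m : ℕ} (hm : 0 < m) (hξ : ξ.exp = m)
    (h : ∀ j, ξ.midCdf j ≤ j / (2 * m)) (n : ℕ) : ξ.p n = UO m n := by
  have hT {j : ℕ} (hj : j ≤ 2 * m) : ξ.midCdf j = (uniformOdd hm).midCdf j := by
    rw [midCdf_eq_of_le hm hξ h hj, midCdf_uniformOdd hm hj]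
  rcases le_or_gt n (2 * m) with hn | hn
  · exact p_eq_of_midCdf_eq (fun j hj => hT hj) n hn
  · have h1 : ξ.midCdf (2 * m) = 1 := by
      rw [hT le_rfl, midCdf_uniformOdd hm le_rfl]
      push_cast
      field_simp
    rw [ξ.p_eq_zero_of_midCdf_eq_one h1 hn, UO, if_neg (by omega)]

end Strategy

theorem half_sub_le_of_forall_payoff_dirac_le {v P : ℝ} (hv : 0 ≤ v) {ξ : Strategy} {m : ℕ}
    (hξ : ξ.exp = m) (h : ∀ j, payoff v (dirac j) ξ ≤ P) : v / 2 - m ≤ P := by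
  have hsum : ∑ j ∈ range (2 * m + 1), (v * ξ.midCdf j - j) ≤ (2 * m + 1) * P := by
    simpa [payoff_dirac] using sum_le_sum fun j (_ : j ∈ range (2 * m + 1)) => h j
  rw [sum_sub_distrib, ← mul_sum, sum_range_cast_two_mul_add_one] at hsum
  have := mul_le_mul_of_nonneg_left (le_sum_range_midCdf hξ) hv
  nlinarith

theorem eq_two_mul_and_payoff_eq_zero {v b : ℝ} {m : ℕ} (hm : 0 < m) (hv : 0 < v) (hb0 : 0 < b)
    (hbm : b < m) {X Y : Strategy} (hX : X.exp = m) (hY : Y.exp = b)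
    (hH : 1 - b / m ≤ Hval X Y) (h : ∀ Y' : Strategy, payoff v Y' X ≤ payoff v Y X) :
    v = 2 * m ∧ payoff v Y X = 0 := by
  have hP0 : 0 ≤ payoff v Y X := by
    have := payoff_dirac v 0 X ▸ h (dirac 0)
    push_cast at this
    nlinarith [X.midCdf_nonneg 0]
  have hPm : m * (v / (2 * m) - 1) ≤ payoff v Y X := by
    rw [show (m : ℝ) * (v / (2 * m) - 1) = v / 2 - m by field_simp]
    exact half_sub_le_of_forall_payoff_dirac_le hv.le hX fun j => h _
  have hPb : payoff v Y X ≤ b * (v / (2 * m) - 1) := by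
    have := mul_le_mul_of_nonneg_left (sub_le_comm.1 hH) (half_pos hv).le
    rw [payoff_eq_Hval, Hval_swap, hY]
    linarith [show v / 2 * (b / m) = b * (v / (2 * m)) by ring]
  have hd : v / (2 * m) - 1 = 0 := by nlinarith
  constructor
  · field_simp at hd
    linarith
  · nlinarith

/-- Lemma 7.1: necessary conditions for an equilibrium with
`E(X) = m ≥ 1` and `E(Y) = b ∈ (0, m)`. -/
theorem allpay_lemma71 (v1 v2 : ℝ) (hv1 : 0 < v1) (hv2 : 0 < v2)
    (m : ℕ) (hm : 1 ≤ m) (b : ℝ) (hb0 : 0 < b) (hbm : b < (m : ℝ))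
    (X Y : Strategy) (hX : X.exp = (m : ℝ)) (hY : Y.exp = b)
    (h : IsNashAPA v1 v2 X Y) :
    (m : ℝ) = v2 / 2 ∧ IsNashLotto (m : ℝ) b X Y ∧ (∀ n, X.p n = UO m n) := by
  have hm0 : 0 < m := hm
  have hLotto : IsNashLotto m b X Y := hX ▸ hY ▸ isNashLotto_of_isNashAPA hv1 hv2 h
  have hH : 1 - b / m ≤ Hval X Y :=
    hY ▸ (le_Hval_uniformOdd hm0 Y).trans (hLotto.2.2.1 _ (exp_uniformOdd hm0))
  obtain ⟨hv, hP⟩ := eq_two_mul_and_payoff_eq_zero hm0 hv2 hb0 hbm hX hY hH h.2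
  refine ⟨by linarith, hLotto, X.p_eq_UO_of_midCdf_le hm0 hX fun j => ?_⟩
  have hj := payoff_dirac v2 j X ▸ h.2 (dirac j)
  rw [hP, hv] at hj
  rw [le_div_iff₀ (by positivity)]
  linarith
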